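/- Let A be an Artinian Gorenstein local k-algebra and I an ideal with end degree u. If H = (h_0, h_1, …, h_u) is the Hilbert function of G(I), then h_u ≤ h_0. Equivalently, any b-admissible sequence with h_u > h_0 is not realizable as the Hilbert function of G(I) for any ideal I in an Artinian Gorenstein k-algebra. -/

import Mathlib

/-!
`I^u` annihilates `I` because `I^{u+1} = 0`, so `h_u = dim_k I^u ≤ dim_k (0 : I)`, while
`h_0 = dim_k A/I`. In a Gorenstein Artinian local ring the socle is a line contained in every
nonzero ideal; hence for a functional `φ` not vanishing on the socle, `x ↦ (a ↦ φ (x a))`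
embeds `(0 : I)` into the dual of `A/I`, giving `dim_k (0 : I) ≤ dim_k A/I`.
-/

/-- Integer powers of an ideal, with the convention `I^j = A` for `j ≤ 0`. -/
def zpowI {A : Type*} [CommRing A] (I : Ideal A) (j : ℤ) : Ideal A :=
  if j ≤ 0 then ⊤ else I ^ j.toNat

/-- The Hilbert function of `G(I)`: `HF(G(I))_i = dim_k I^i/I^{i+1}`. -/
noncomputable def hfGI (k : Type*) {A : Type*} [Field k] [CommRing A] [Algebra k A]
    (I : Ideal A) (i : ℤ) : ℕ :=
  Module.finrank k (Submodule.restrictScalars k (zpowI I i)) -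
    Module.finrank k (Submodule.restrictScalars k (zpowI I (i + 1)))

open IsLocalRing Module

section Socle

variable {A : Type*} [CommRing A] [IsLocalRing A]

theorem exists_ne_zero_mem_colon_maximalIdeal [IsArtinianRing A] {J : Ideal A} (hJ : J ≠ ⊥) :
    ∃ y ∈ J, y ≠ 0 ∧ y ∈ (⊥ : Ideal A).colon (maximalIdeal A) := by
  obtain ⟨n, hn⟩ := IsArtinianRing.isNilpotent_jacobson_bot (R := A)
  rw [jacobson_eq_maximalIdeal ⊥ bot_ne_top] at hn
  obtain ⟨i, hi, hi1⟩ := Nat.exists_not_and_succ_of_not_zero_of_exists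
    (p := fun j ↦ maximalIdeal A ^ j * J = ⊥) (by rwa [pow_zero, one_mul])
    ⟨n, by rw [hn, Ideal.zero_eq_bot, Ideal.bot_mul]⟩
  obtain ⟨y, hy, hy0⟩ := Submodule.exists_mem_ne_zero_of_ne_bot hi
  refine ⟨y, Ideal.mul_le_right hy, hy0, Submodule.mem_colon.2 fun r hr ↦ ?_⟩
  rw [smul_eq_mul, mul_comm, ← hi1, pow_succ', mul_assoc]
  exact Ideal.mul_mem_mul hr hy

variable {k : Type*} [Field k] [Algebra k A]

theorem colon_maximalIdeal_le_of_ne_bot [IsArtinianRing A]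
    (hsoc : finrank k (((⊥ : Ideal A).colon (maximalIdeal A)).restrictScalars k) = 1)
    {J : Ideal A} (hJ : J ≠ ⊥) : (⊥ : Ideal A).colon (maximalIdeal A) ≤ J := by
  obtain ⟨y, hyJ, hy0, hyS⟩ := exists_ne_zero_mem_colon_maximalIdeal hJ
  intro x hx
  obtain ⟨c, hc⟩ := (finrank_eq_one_iff_of_nonzero'
    (⟨y, hyS⟩ : ((⊥ : Ideal A).colon (maximalIdeal A)).restrictScalars k)
    fun h ↦ hy0 (congrArg Subtype.val h)).1 hsoc ⟨x, hx⟩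
  rw [show x = c • y from congrArg Subtype.val hc.symm]
  exact J.smul_of_tower_mem c hyJ

theorem finrank_colon_le_finrank_quotient [Module.Finite k A]
    (hsoc : finrank k (((⊥ : Ideal A).colon (maximalIdeal A)).restrictScalars k) = 1)
    (J : Ideal A) :
    finrank k (((⊥ : Ideal A).colon J).restrictScalars k) ≤
      finrank k (A ⧸ J.restrictScalars k) := by
  have : IsArtinianRing A := isArtinian_of_tower k inferInstance
  obtain ⟨s, -, hs0, hsS⟩ :=
    exists_ne_zero_mem_colon_maximalIdeal (J := (⊤ : Ideal A)) top_ne_bot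
  obtain ⟨φ, hφ⟩ := Projective.exists_dual_ne_zero k hs0
  let Ψ : ((⊥ : Ideal A).colon J).restrictScalars k →ₗ[k] Dual k A :=
    LinearMap.llcomp k A A k φ ∘ₗ LinearMap.mul k A ∘ₗ Submodule.subtype _
  have hΨJ : ∀ x, Ψ x ∈ (J.restrictScalars k).dualAnnihilator := fun x ↦
    (Submodule.mem_dualAnnihilator _).2 fun a ha ↦ by
      have hxa : (x : A) * a = 0 := by
        simpa [mul_comm] using (Submodule.mem_colon.1 x.2) a ha
      simp [Ψ, hxa]
  -- a nonzero `x` generates an ideal containing `s`, so `φ (x c) = φ s ≠ 0` for some `c`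
  have hinj : Function.Injective (Ψ.codRestrict _ hΨJ) := by
    refine (injective_iff_map_eq_zero _).2 fun x hx ↦ ?_
    by_contra hx0
    have hspan : Ideal.span {(x : A)} ≠ ⊥ :=
      mt Ideal.span_singleton_eq_bot.1 (Subtype.coe_ne_coe.2 hx0)
    obtain ⟨c, hc⟩ :=
      Ideal.mem_span_singleton'.1 (colon_maximalIdeal_le_of_ne_bot hsoc hspan hsS)
    have hΨx : Ψ x = 0 := congrArg Subtype.val hx
    exact hφ (by simpa [Ψ, mul_comm, hc] using LinearMap.congr_fun hΨx c)
  calc finrank k (((⊥ : Ideal A).colon J).restrictScalars k)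
      ≤ finrank k (J.restrictScalars k).dualAnnihilator :=
        LinearMap.finrank_le_finrank_of_injective hinj
    _ = finrank k (A ⧸ J.restrictScalars k) :=
        (Subspace.quotEquivAnnihilator _).symm.finrank_eq

end Socle

section HilbertFunction

variable {k A : Type*} [Field k] [CommRing A] [Algebra k A] (I : Ideal A)

theorem zpowI_natCast (n : ℕ) : zpowI I n = I ^ n := by
  cases n <;> simp [zpowI]

theorem hfGI_natCast (n : ℕ) :
    hfGI k I n =
      finrank k ((I ^ n).restrictScalars k) - finrank k ((I ^ (n + 1)).restrictScalars k) := by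
  rw [hfGI, ← Nat.cast_succ, zpowI_natCast, zpowI_natCast]

theorem hfGI_zero [Module.Finite k A] : hfGI k I 0 = finrank k (A ⧸ I.restrictScalars k) := by
  rw [← Nat.cast_zero, hfGI_natCast, pow_zero, pow_one, Ideal.one_eq_top,
    Submodule.restrictScalars_top, finrank_top,
    ← Submodule.finrank_quotient_add_finrank (I.restrictScalars k), Nat.add_sub_cancel]

theorem hfGI_of_pow_succ_eq_bot {u : ℕ} (hu : I ^ (u + 1) = ⊥) :
    hfGI k I u = finrank k ((I ^ u).restrictScalars k) := by
  rw [hfGI_natCast, hu, Submodule.restrictScalars_bot, finrank_bot, Nat.sub_zero]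

end HilbertFunction

theorem last_le_first_general {k A : Type*} [Field k] [CommRing A]
    [IsLocalRing A] [Algebra k A] [Module.Finite k A]
    (hGor : Module.finrank k
      (Submodule.restrictScalars k
        ((⊥ : Ideal A).colon (IsLocalRing.maximalIdeal A))) = 1)
    (I : Ideal A) (u : ℕ)
    (hu1 : zpowI I ((u : ℤ) + 1) = ⊥) :
    hfGI k I (u : ℤ) ≤ hfGI k I 0 := by
  have hIu1 : I ^ (u + 1) = ⊥ := by rw [← zpowI_natCast, Nat.cast_succ, hu1]
  have hIu_le : I ^ u ≤ (⊥ : Ideal A).colon I := fun x hx ↦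
    Submodule.mem_colon.2 fun a ha ↦ by
      simpa only [smul_eq_mul, ← pow_succ, hIu1] using Ideal.mul_mem_mul hx ha
  calc hfGI k I u = finrank k ((I ^ u).restrictScalars k) := hfGI_of_pow_succ_eq_bot I hIu1
    _ ≤ finrank k (((⊥ : Ideal A).colon I).restrictScalars k) :=
        Submodule.finrank_mono (Submodule.restrictScalars_mono k hIu_le)
    _ ≤ finrank k (A ⧸ I.restrictScalars k) := finrank_colon_le_finrank_quotient hGor I
    _ = hfGI k I 0 := (hfGI_zero I).symm

/-- If `H = (h_0, …, h_u)` is the Hilbert function of `G(I)` for an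
ideal `I` with end degree `u` in an Artinian Gorenstein local `k`-algebra, then
`h_u ≤ h_0`. -/
theorem last_le_first {k A : Type*} [Field k] [CommRing A]
    [IsLocalRing A] [Algebra k A] [Module.Finite k A]
    (hres : Function.Bijective ((IsLocalRing.residue A) ∘ (algebraMap k A)))
    (hGor : Module.finrank k
      (Submodule.restrictScalars k
        ((⊥ : Ideal A).colon (IsLocalRing.maximalIdeal A))) = 1)
    (I : Ideal A) (u : ℕ)
    (hu : zpowI I (u : ℤ) ≠ ⊥) (hu1 : zpowI I ((u : ℤ) + 1) = ⊥) :
    hfGI k I (u : ℤ) ≤ hfGI k I 0 :=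
  last_le_first_general hGor I u hu1
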